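/- Let ∂¹Ω ≺ ∂²Ω be compactifications of a bounded domain Ω with continuous projection Φ : Ω̄² → Ω̄¹ fixing Ω, and let f : ∂¹Ω → ℝ̄. Then the Perron classes satisfy U_{f∘Φ}(Ω²) = U_f(Ω¹); consequently uP_{Ω¹} f = uP_{Ω²}(f ∘ Φ) and lP_{Ω¹} f = lP_{Ω²}(f ∘ Φ). In particular, f is resolutive with respect to Ω¹ if and only if f ∘ Φ is resolutive with respect to Ω², and then P_{Ω¹} f = P_{Ω²}(f ∘ Φ). -/

import Mathlib

/-!
Pulling back along `Φ` only refines the approach filters at boundary points, so a function in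
the upper class of `f` lies in that of `f ∘ Φ`. Conversely, since `X₂` is compact and `X₁` is
Hausdorff, `Φ` is a closed map: every neighbourhood of the fibre `Φ⁻¹(y)` contains the preimage
of a neighbourhood of `y`. Hence a strict lower bound for `u` valid near each point of the fibre
is valid near `y`, and the boundary conditions at the fibre give the one at `y`.
-/

open Filter Set

/-- An extended-real-valued function bounded from below by a real constant. -/
def BddBelowE {α : Type*} (u : α → EReal) : Prop :=
  ∃ m : ℝ, ∀ y, (m : EReal) ≤ u y

/-- The upper (Perron) class of `f`, relative to the compactification given by the
dense embedding `e : Ω → X`: superharmonic functions (the abstract predicate `SH`),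
bounded from below, with `liminf_{Ω ∋ y → x} u(y) ≥ f(x)` at every boundary point
`x ∈ X \ e(Ω)` (only the boundary values of `f : X → ℝ̄` are used). -/
def upperPerronClass {Ω X : Type*} [TopologicalSpace Ω] [TopologicalSpace X]
    (e : Ω → X) (SH : (Ω → EReal) → Prop) (f : X → EReal) : Set (Ω → EReal) :=
  {u | SH u ∧ BddBelowE u ∧
    ∀ x : X, x ∉ Set.range e → f x ≤ liminf u (Filter.comap e (nhds x))}

/-- The upper Perron solution. -/
noncomputable def uP {Ω X : Type*} [TopologicalSpace Ω] [TopologicalSpace X]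
    (e : Ω → X) (SH : (Ω → EReal) → Prop) (f : X → EReal) : Ω → EReal :=
  fun z => ⨅ u ∈ upperPerronClass e SH f, u z

/-- The lower Perron solution `lP f := -uP(-f)`. -/
noncomputable def lP {Ω X : Type*} [TopologicalSpace Ω] [TopologicalSpace X]
    (e : Ω → X) (SH : (Ω → EReal) → Prop) (f : X → EReal) : Ω → EReal :=
  fun z => - uP e SH (fun x => - f x) z

open Topology

section Liminf

variable {Ω X₁ X₂ β : Type*} [TopologicalSpace X₁] [TopologicalSpace X₂]
  [CompleteLinearOrder β] {u : Ω → β} {a : β}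

theorem le_liminf_comap_nhdsSet [DenselyOrdered β] {e : Ω → X₂} {s : Set X₂}
    (h : ∀ x ∈ s, a ≤ liminf u (comap e (𝓝 x))) : a ≤ liminf u (comap e (𝓝ˢ s)) := by
  refine le_of_forall_lt_imp_le_of_dense fun b hb => le_liminf_of_le (by isBoundedDefault) ?_
  have eventually_ge : ∀ x ∈ s, ∀ᶠ z in comap e (𝓝 x), b ≤ u z := fun x hx =>
    (eventually_lt_of_lt_liminf (hb.trans_le (h x hx))).mono fun _ => le_of_lt
  exact eventually_comap.2 <|
    eventually_nhdsSet_iff_forall.2 fun x hx => eventually_comap.1 (eventually_ge x hx)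

theorem le_liminf_comap_nhds_of_forall_fiber [DenselyOrdered β] [CompactSpace X₂] [T2Space X₁]
    {e₁ : Ω → X₁} {e₂ : Ω → X₂} {Φ : X₂ → X₁} (hΦ : Continuous Φ) (hΦe : Φ ∘ e₂ = e₁)
    {y : X₁} (h : ∀ x ∈ Φ ⁻¹' {y}, a ≤ liminf u (comap e₂ (𝓝 x))) :
    a ≤ liminf u (comap e₁ (𝓝 y)) := by
  have hle : comap e₁ (𝓝 y) ≤ comap e₂ (𝓝ˢ (Φ ⁻¹' {y})) := by
    rw [← hΦe, ← comap_comap]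
    exact comap_mono hΦ.isClosedMap.comap_nhds_le
  exact (le_liminf_comap_nhdsSet h).trans (liminf_le_liminf_of_le hle)

theorem liminf_comap_nhds_le_of_comp_eq {e₁ : Ω → X₁} {e₂ : Ω → X₂} {Φ : X₂ → X₁}
    (hΦe : Φ ∘ e₂ = e₁) {x : X₂} (hΦ : ContinuousAt Φ x) :
    liminf u (comap e₁ (𝓝 (Φ x))) ≤ liminf u (comap e₂ (𝓝 x)) := by
  refine liminf_le_liminf_of_le ?_
  rw [← hΦe, ← comap_comap]
  exact comap_mono hΦ.tendsto.le_comap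

end Liminf

section Perron

variable {Ω X₁ X₂ : Type*} [TopologicalSpace Ω] [TopologicalSpace X₁] [TopologicalSpace X₂]
  {e₁ : Ω → X₁} {e₂ : Ω → X₂} {Φ : X₂ → X₁}

theorem upperPerronClass_comp_eq [CompactSpace X₂] [T2Space X₁] (hΦc : Continuous Φ)
    (hΦe : ∀ x, Φ (e₂ x) = e₁ x) (hΦbd : ∀ x : X₂, x ∉ Set.range e₂ → Φ x ∉ Set.range e₁)
    (SH : (Ω → EReal) → Prop) (f : X₁ → EReal) :
    upperPerronClass e₂ SH (f ∘ Φ) = upperPerronClass e₁ SH f := by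
  have hce : Φ ∘ e₂ = e₁ := funext hΦe
  ext u
  simp only [upperPerronClass, mem_ofPred_eq, and_congr_right_iff]
  refine fun _ _ => ⟨fun h y hy => ?_, fun h x hx => ?_⟩
  · refine le_liminf_comap_nhds_of_forall_fiber hΦc hce fun x (hx : Φ x = y) => ?_
    have hx_bd : x ∉ range e₂ := by
      rintro ⟨z, rfl⟩
      exact hy ⟨z, (hΦe z).symm.trans hx⟩
    simpa only [Function.comp_apply, hx] using h x hx_bd
  · exact (h (Φ x) (hΦbd x hx)).trans
      (liminf_comap_nhds_le_of_comp_eq hce hΦc.continuousAt)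

theorem uP_comp_eq [CompactSpace X₂] [T2Space X₁] (hΦc : Continuous Φ)
    (hΦe : ∀ x, Φ (e₂ x) = e₁ x) (hΦbd : ∀ x : X₂, x ∉ Set.range e₂ → Φ x ∉ Set.range e₁)
    (SH : (Ω → EReal) → Prop) (f : X₁ → EReal) :
    uP e₂ SH (f ∘ Φ) = uP e₁ SH f := by
  unfold uP
  rw [upperPerronClass_comp_eq hΦc hΦe hΦbd]

theorem lP_comp_eq [CompactSpace X₂] [T2Space X₁] (hΦc : Continuous Φ)
    (hΦe : ∀ x, Φ (e₂ x) = e₁ x) (hΦbd : ∀ x : X₂, x ∉ Set.range e₂ → Φ x ∉ Set.range e₁)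
    (SH : (Ω → EReal) → Prop) (f : X₁ → EReal) :
    lP e₂ SH (f ∘ Φ) = lP e₁ SH f :=
  funext fun z => congrArg Neg.neg (congrFun (uP_comp_eq hΦc hΦe hΦbd SH (-f)) z)

end Perron

theorem stmt_19_general {Ω X₁ X₂ : Type*} [TopologicalSpace Ω]
    [TopologicalSpace X₁] [T2Space X₁]
    [TopologicalSpace X₂] [CompactSpace X₂]
    (e₁ : Ω → X₁)
    (e₂ : Ω → X₂)
    (Φ : X₂ → X₁) (hΦc : Continuous Φ) (hΦe : ∀ x, Φ (e₂ x) = e₁ x)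
    (hΦbd : ∀ x : X₂, x ∉ Set.range e₂ → Φ x ∉ Set.range e₁)
    (SH : (Ω → EReal) → Prop)
    (f : X₁ → EReal) :
    upperPerronClass e₂ SH (f ∘ Φ) = upperPerronClass e₁ SH f ∧
    (∀ z, uP e₂ SH (f ∘ Φ) z = uP e₁ SH f z) ∧
    (∀ z, lP e₂ SH (f ∘ Φ) z = lP e₁ SH f z) ∧
    ((∀ z, uP e₁ SH f z = lP e₁ SH f z) ↔
      (∀ z, uP e₂ SH (f ∘ Φ) z = lP e₂ SH (f ∘ Φ) z)) := by
  have huP := uP_comp_eq hΦc hΦe hΦbd SH f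
  have hlP := lP_comp_eq hΦc hΦe hΦbd SH f
  refine ⟨upperPerronClass_comp_eq hΦc hΦe hΦbd SH f, congrFun huP, congrFun hlP, ?_⟩
  rw [huP, hlP]

/-- let `∂¹Ω ≺ ∂²Ω` be compactifications `X₁`, `X₂` of the bounded
domain `Ω` with continuous projection `Φ : X₂ → X₁` fixing `Ω` (which maps the
boundary into the boundary), and let `f` be a boundary function for `X₁`.  Then the
Perron classes satisfy `U_{f∘Φ}(Ω²) = U_f(Ω¹)`; consequently
`uP_{Ω¹} f = uP_{Ω²}(f ∘ Φ)` and `lP_{Ω¹} f = lP_{Ω²}(f ∘ Φ)`.  In particular `f`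
is resolutive w.r.t. `Ω¹` iff `f ∘ Φ` is resolutive w.r.t. `Ω²`, and then
`P_{Ω¹} f = P_{Ω²}(f ∘ Φ)`. -/
theorem stmt_19 {Ω X₁ X₂ : Type*} [TopologicalSpace Ω] [T2Space Ω]
    [LocallyCompactSpace Ω] [NoncompactSpace Ω]
    [TopologicalSpace X₁] [CompactSpace X₁] [T2Space X₁]
    [TopologicalSpace X₂] [CompactSpace X₂] [T2Space X₂]
    (e₁ : Ω → X₁) (he₁ : Topology.IsEmbedding e₁) (hd₁ : DenseRange e₁)
    (e₂ : Ω → X₂) (he₂ : Topology.IsEmbedding e₂) (hd₂ : DenseRange e₂)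
    (Φ : X₂ → X₁) (hΦc : Continuous Φ) (hΦe : ∀ x, Φ (e₂ x) = e₁ x)
    (hΦbd : ∀ x : X₂, x ∉ Set.range e₂ → Φ x ∉ Set.range e₁)
    (SH : (Ω → EReal) → Prop)
    (f : X₁ → EReal) :
    upperPerronClass e₂ SH (f ∘ Φ) = upperPerronClass e₁ SH f ∧
    (∀ z, uP e₂ SH (f ∘ Φ) z = uP e₁ SH f z) ∧
    (∀ z, lP e₂ SH (f ∘ Φ) z = lP e₁ SH f z) ∧
    ((∀ z, uP e₁ SH f z = lP e₁ SH f z) ↔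
      (∀ z, uP e₂ SH (f ∘ Φ) z = lP e₂ SH (f ∘ Φ) z)) :=
  stmt_19_general e₁ e₂ Φ hΦc hΦe hΦbd SH f
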